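/- Let S be a string in which the character σ occurs exactly ℓ ≥ 2 times, let e = ⌊ℓ/2⌋, let Y be an Algorithm-1 output for S and σ, and let Z be an Algorithm-2 output for S and σ built from Y. Then ZZ is a maximal square subsequence of S, and ZZ contains σ^{2e} as a subsequence. -/

import Mathlib

open List

variable {α : Type*}

/-- The substring of `S` from 1-indexed position `a` to position `b`, inclusive
(empty when `a > b`). -/
def substr (S : List α) (a b : ℕ) : List α := (S.drop (a - 1)).take (b + 1 - a)

/-- `X` is a square subsequence of `S`. -/
def IsSquareSubseq (S X : List α) : Prop := (∃ Y, X = Y ++ Y) ∧ X <+ S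

/-- `X` is a maximal square subsequence of `S`: it is a square subsequence of `S` and
is not a proper subsequence of any other square subsequence of `S`. -/
def IsMaxSquareSubseq (S X : List α) : Prop :=
  IsSquareSubseq S X ∧ ∀ X', IsSquareSubseq S X' → X <+ X' → X' = X

/-- The square subsequence `Y ++ Y` is right-extendable in `S`. -/
def RightExtendable (S Y : List α) : Prop := ∃ y : α, Y ++ [y] ++ Y ++ [y] <+ S

/-- The square subsequence `Y ++ Y` is left-extendable in `S`. -/
def LeftExtendable (S Y : List α) : Prop := ∃ y : α, [y] ++ Y ++ [y] ++ Y <+ S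

/-- The square subsequence `Y ++ Y` is inner-extendable in `S`. -/
def InnerExtendable (S Y : List α) : Prop :=
  ∃ (y : α) (Y₁ Y₂ : List α), Y = Y₁ ++ Y₂ ∧ Y₁ ≠ [] ∧ Y₂ ≠ [] ∧
    Y₁ ++ [y] ++ Y₂ ++ Y₁ ++ [y] ++ Y₂ <+ S

/-- `X` is a `k`-repeating subsequence of `S`: the `k`-fold concatenation of `X`
is a subsequence of `S`. -/
def IsKRep (k : ℕ) (S X : List α) : Prop := (List.replicate k X).flatten <+ S

/-- `X` is a maximal `k`-repeating subsequence of `S`: the only `k`-repeating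
subsequence of `S` having `X` as a subsequence is `X` itself. -/
def IsMaxKRep (k : ℕ) (S X : List α) : Prop :=
  IsKRep k S X ∧ ∀ Y, IsKRep k S Y → X <+ Y → Y = X

/-- A `σ`-split point for `A` and `B` in `S`: a strictly increasing `k`-tuple of
1-indexed positions of `S` carrying `σ`, such that around each position `p i` one
can place `A` immediately to its left and `B` immediately to its right within a
window `[a i, b i]`, with consecutive windows disjoint (`b i < a (i+1)`). -/
def IsSplitPoint (S : List α) (σ : α) (A B : List α) (k : ℕ) (p : Fin k → ℕ) : Prop :=
  StrictMono p ∧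
  (∀ i, 1 ≤ p i ∧ p i ≤ S.length ∧ substr S (p i) (p i) = [σ]) ∧
  ∃ a b : Fin k → ℕ,
    (∀ i, 1 ≤ a i ∧ a i ≤ p i ∧ p i ≤ b i ∧ b i ≤ S.length ∧
      A <+ substr S (a i) (p i - 1) ∧ B <+ substr S (p i + 1) (b i)) ∧
    ∀ i j : Fin k, (i : ℕ) + 1 = (j : ℕ) → b i < a j

/-- A `σ`-start for `σ^r` in `S`: a strictly increasing `k`-tuple of 1-indexed
positions of `S` carrying `σ`, such that (with `p (k+1) = |S| + 1`) the string
`σ^r` is a subsequence of `S[p j .. p (j+1) − 1]` for every `j`. -/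
def IsSigmaStart (S : List α) (σ : α) (r k : ℕ) (p : Fin k → ℕ) : Prop :=
  StrictMono p ∧
  (∀ i, 1 ≤ p i ∧ p i ≤ S.length ∧ substr S (p i) (p i) = [σ]) ∧
  ∀ i : Fin k, List.replicate r σ <+
    substr S (p i) ((if h : (i : ℕ) + 1 < k then p ⟨(i : ℕ) + 1, h⟩ else S.length + 1) - 1)

/-- `W` is a maximal common subsequence of `T₁` and `T₂` containing `X`. -/
def IsMCSContaining (T₁ T₂ X W : List α) : Prop :=
  X <+ W ∧ W <+ T₁ ∧ W <+ T₂ ∧ ∀ W', W <+ W' → W' <+ T₁ → W' <+ T₂ → W' = W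

/-- `p` is the 1-indexed position of the `t`-th occurrence (1-indexed `t`) of `σ` in `S`:
`S[p] = σ` and exactly `t - 1` occurrences of `σ` lie strictly before position `p`. -/
def NthOccPos [DecidableEq α] (S : List α) (σ : α) (t p : ℕ) : Prop :=
  1 ≤ p ∧ p ≤ S.length ∧ substr S p p = [σ] ∧ (substr S 1 (p - 1)).count σ = t - 1

/-- `j` is the leftmost anchor of `Y` with position `i` in `S`: the smallest index `j`
such that `Y` is a subsequence of `S[i..j]`. -/
def LeftmostAnchor (S Y : List α) (i j : ℕ) : Prop :=
  Y <+ substr S i j ∧ ∀ j', Y <+ substr S i j' → j ≤ j'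

/-- `Y` is an Algorithm-1 output for `S` and `σ` (Algorithm 1 of the paper), where
`ℓ = count σ S` and `e = ⌊ℓ/2⌋`. -/
def Alg1Output [DecidableEq α] (S : List α) (σ : α) (Y : List α) : Prop :=
  ∃ (i1 ie1 : ℕ) (Y₀ : List α),
    NthOccPos S σ 1 i1 ∧
    NthOccPos S σ (S.count σ / 2 + 1) ie1 ∧
    IsMCSContaining (substr S i1 (ie1 - 1)) (substr S ie1 S.length)
      (List.replicate (S.count σ / 2) σ) Y₀ ∧
    ((Y = Y₀ ∧ (Odd (S.count σ) → ∀ ie2, NthOccPos S σ (S.count σ / 2 + 2) ie2 →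
        ¬ Y₀ <+ substr S ie2 S.length)) ∨
     (Odd (S.count σ) ∧ ∃ ie2, NthOccPos S σ (S.count σ / 2 + 2) ie2 ∧
        Y₀ <+ substr S ie2 S.length ∧
        IsMCSContaining (substr S i1 (ie2 - 1)) (substr S ie2 S.length) Y₀ Y))

/-- `Z` is an Algorithm-2 output for `S` and `σ` built from the Algorithm-1 output `Y`
(Algorithm 2 of the paper). -/
def Alg2Output [DecidableEq α] (S : List α) (σ : α) (Y Z : List α) : Prop :=
  ∃ (i1 i2 j1 : ℕ) (Z₀ : List α),
    NthOccPos S σ 1 i1 ∧ NthOccPos S σ 2 i2 ∧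
    LeftmostAnchor S Y i1 j1 ∧
    IsMCSContaining (substr S 1 j1) (substr S (j1 + 1) S.length) Y Z₀ ∧
    ((Z = Z₀ ∧ (Odd (S.count σ) → ∀ j2, LeftmostAnchor S Y i2 j2 →
        ¬ Z₀ <+ substr S (j2 + 1) S.length)) ∨
     (Odd (S.count σ) ∧ ∃ j2, LeftmostAnchor S Y i2 j2 ∧
        Z₀ <+ substr S (j2 + 1) S.length ∧
        IsMCSContaining (substr S 1 j2) (substr S (j2 + 1) S.length) Z₀ Z))

/-!
Suppose `Z ++ Z <+ W ++ W <+ S`. Then `Z <+ W`, and `S = U ++ V` with `W <+ U` and `W <+ V`.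
Split `W = G ++ σ :: H` at the letter matched by the leading `σ` of `Y`. As
`σ ^ e <+ Y <+ σ :: H` while `S` contains only `ℓ ≤ 2 e + 1` letters `σ`, that letter lies at
the first or second occurrence of `σ` in `U` and at the `(e + 1)`-st or `(e + 2)`-nd in `V`, the
larger choices forcing `ℓ` odd. In every case `σ :: H` is a common subsequence of the windows of
Algorithm 1 and therefore equals `Y`; then `W` is a common subsequence of the windows of
Algorithm 2, the cut between `U` and `V` lying beyond the leftmost anchor of `Y`, so `W = Z`.
-/

theorem List.Sublist.exists_eq_append_cons {a : α} {l r : List α} (h : a :: l <+ r) :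
    ∃ r₁ r₂, r = r₁ ++ a :: r₂ ∧ l <+ r₂ := by
  obtain ⟨r₁, r₂, rfl, ha, hl⟩ := cons_sublist_iff.mp h
  obtain ⟨s, t, rfl⟩ := append_of_mem ha
  exact ⟨s, t ++ r₂, by simp, hl.trans (sublist_append_right t r₂)⟩

theorem List.Sublist.exists_eq_append_cons_of_append {a : α} {l₁ l₂ r : List α}
    (h : l₁ ++ a :: l₂ <+ r) : ∃ r₁ r₂, r = r₁ ++ a :: r₂ ∧ l₁ <+ r₁ ∧ l₂ <+ r₂ := by
  obtain ⟨r₁, r₂, rfl, h₁, h₂⟩ := append_sublist_iff.mp h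
  obtain ⟨s, t, rfl, hl⟩ := h₂.exists_eq_append_cons
  exact ⟨r₁ ++ s, t, by simp, h₁.trans (sublist_append_left r₁ s), hl⟩

theorem List.Sublist.of_append_self {l r : List α} (h : l ++ l <+ r ++ r) : l <+ r := by
  obtain ⟨l₁, l₂, hl, h₁, h₂⟩ := sublist_append_iff.mp h
  rcases append_eq_append_iff.mp hl with ⟨k, rfl, -⟩ | ⟨k, -, rfl⟩
  · exact (sublist_append_left l k).trans h₁
  · exact (sublist_append_right k l).trans h₂

theorem substr_eq_drop_take (S : List α) {i : ℕ} (j : ℕ) (hi : 1 ≤ i) :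
    substr S i j = (S.take j).drop (i - 1) := by
  rw [substr, take_drop]
  rcases le_or_gt i (j + 1) with hij | hji
  · rw [show i - 1 + (j + 1 - i) = j by omega]
  · rw [drop_eq_nil_of_le (by simp; omega), drop_eq_nil_of_le (by simp; omega)]

theorem substr_one_left (S : List α) (j : ℕ) : substr S 1 j = S.take j := by
  simp [substr]

theorem substr_length_right (S : List α) (i : ℕ) : substr S i S.length = S.drop (i - 1) := by
  rw [substr, take_of_length_le (by simp; omega)]

theorem substr_eq_of_eq_append {S A B C : List α} {i j : ℕ} (h : S = A ++ B ++ C)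
    (hi : i = A.length + 1) (hj : j = A.length + B.length) : substr S i j = B := by
  subst h hi hj
  rw [substr_eq_drop_take _ _ (by omega), append_assoc, take_append]
  simp

theorem substr_sublist_substr_of_le (S : List α) {i i' : ℕ} (j : ℕ) (hi : 1 ≤ i) (h : i ≤ i') :
    substr S i' j <+ substr S i j := by
  rw [substr_eq_drop_take S j hi, substr_eq_drop_take S j (hi.trans h)]
  exact drop_sublist_drop_left _ (by omega)

theorem take_eq_take_append_substr (S : List α) {i j : ℕ} (hi : 1 ≤ i) (hij : i ≤ j + 1) :
    S.take j = S.take (i - 1) ++ substr S i j := by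
  rw [substr_eq_drop_take S j hi]
  conv_lhs => rw [← take_append_drop (i - 1) (S.take j)]
  rw [take_take, min_eq_left (by omega)]

section Occurrences

variable [DecidableEq α] {S : List α} {σ : α} {t t' p p' : ℕ}

theorem nthOccPos_of_eq_append_cons {A B : List α} (h : S = A ++ σ :: B) :
    NthOccPos S σ (A.count σ + 1) (A.length + 1) := by
  subst h
  refine ⟨by omega, by simp, ?_, ?_⟩
  · simp [substr]
  · simp [substr_one_left]

theorem NthOccPos.drop_sub_one (h : NthOccPos S σ t p) : S.drop (p - 1) = σ :: S.drop p := by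
  have hσ : (S.drop (p - 1)).take 1 = [σ] := by
    simpa [substr, show p + 1 - p = 1 by omega] using h.2.2.1
  have hp : p - 1 + 1 = p := by have := h.1; omega
  rw [← take_append_drop 1 (S.drop (p - 1)), hσ, drop_drop, hp]
  rfl

theorem NthOccPos.count_take_sub_one (h : NthOccPos S σ t p) :
    (S.take (p - 1)).count σ = t - 1 := by
  simpa [substr_one_left] using h.2.2.2

theorem NthOccPos.count_take (h : NthOccPos S σ t p) (ht : 1 ≤ t) : (S.take p).count σ = t := by
  have hp : p - 1 + 1 = p := by have := h.1; omega
  rw [← hp, take_add, h.drop_sub_one, take_succ_cons, take_zero, count_append,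
    h.count_take_sub_one, count_singleton_self]
  omega

theorem NthOccPos.lt_iff_lt (h : NthOccPos S σ t p) (h' : NthOccPos S σ t' p') (ht : 1 ≤ t)
    (ht' : 1 ≤ t') : p < p' ↔ t < t' := by
  constructor
  · intro hpp'
    have := (take_sublist_take_left (l := S) (show p ≤ p' - 1 by omega)).count_le σ
    rw [h.count_take ht, h'.count_take_sub_one] at this
    omega
  · intro htt'
    by_contra hpp'
    have := (take_sublist_take_left (l := S) (show p' ≤ p by omega)).count_le σ
    rw [h.count_take ht, h'.count_take ht'] at this
    omega

theorem NthOccPos.le_of_le (h : NthOccPos S σ t p) (h' : NthOccPos S σ t' p') (ht : 1 ≤ t)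
    (htt' : t ≤ t') : p ≤ p' :=
  not_lt.mp fun hp'p => by have := (h'.lt_iff_lt h (by omega) ht).mp hp'p; omega

theorem NthOccPos.unique (h : NthOccPos S σ t p) (h' : NthOccPos S σ t p') (ht : 1 ≤ t) :
    p = p' :=
  le_antisymm (h.le_of_le h' ht le_rfl) (h'.le_of_le h ht le_rfl)

theorem NthOccPos.exists_substr_eq_cons (h : NthOccPos S σ t p) {j : ℕ} (hj : p ≤ j) :
    ∃ T, substr S p j = σ :: T :=
  ⟨_, by rw [substr, h.drop_sub_one, show j + 1 - p = j - p + 1 by omega, take_succ_cons]⟩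

end Occurrences

theorem IsMCSContaining.exists_eq_cons {T₁ T₂ X W : List α} {σ : α}
    (h : IsMCSContaining (σ :: T₁) (σ :: T₂) X W) : ∃ W', W = σ :: W' := by
  obtain ⟨-, h₁, h₂, hmax⟩ := h
  rcases sublist_cons_iff.mp h₁ with h₁ | ⟨W', rfl, -⟩
  · rcases sublist_cons_iff.mp h₂ with h₂ | ⟨W', rfl, -⟩
    · exact absurd (hmax _ (sublist_cons_self σ W) (h₁.cons_cons σ) (h₂.cons_cons σ))
        (cons_ne_self σ W)
    · exact ⟨W', rfl⟩
  · exact ⟨W', rfl⟩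

theorem IsMCSContaining.exists_eq_cons_of_nthOccPos [DecidableEq α] {S X W : List α} {σ : α}
    {t t' p p' : ℕ} (hW : IsMCSContaining (substr S p (p' - 1)) (substr S p' S.length) X W)
    (hp : NthOccPos S σ t p) (hp' : NthOccPos S σ t' p') (hpp' : p < p') : ∃ W', W = σ :: W' := by
  obtain ⟨T₁, h₁⟩ := hp.exists_substr_eq_cons (j := p' - 1) (by omega)
  obtain ⟨T₂, h₂⟩ := hp'.exists_substr_eq_cons hp'.2.1
  rw [h₁, h₂] at hW
  exact hW.exists_eq_cons

theorem exists_leftmostAnchor {S Y : List α} {i m : ℕ} (h : Y <+ substr S i m) :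
    ∃ j, LeftmostAnchor S Y i j := by
  classical
  have hex : ∃ j, Y <+ substr S i j := ⟨m, h⟩
  exact ⟨Nat.find hex, Nat.find_spec hex, fun _ => Nat.find_min' hex⟩

theorem LeftmostAnchor.le_of_ne_nil {S Y : List α} {i j : ℕ} (h : LeftmostAnchor S Y i j)
    (hY : Y ≠ []) : i ≤ j := by
  by_contra hji
  have : substr S i j = [] := by rw [substr, show j + 1 - i = 0 by omega, take_zero]
  exact hY (eq_nil_of_sublist_nil (this ▸ h.1))

theorem IsMCSContaining.append_eq_of_leftmostAnchor {S G Y X W : List α} {p j m : ℕ}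
    (hW : IsMCSContaining (substr S 1 j) (substr S (j + 1) S.length) X W)
    (hj : LeftmostAnchor S Y p j) (hY : Y ≠ []) (hp : 1 ≤ p)
    (hG : G <+ S.take (p - 1)) (hYm : Y <+ substr S p m) (hm : G ++ Y <+ S.drop m)
    (hWGY : W <+ G ++ Y) : G ++ Y = W := by
  have hjm : j ≤ m := hj.2 m hYm
  have hpj : p ≤ j := hj.le_of_ne_nil hY
  refine hW.2.2.2 _ hWGY ?_ ?_
  · rw [substr_one_left, take_eq_take_append_substr S hp (by omega)]
    exact hG.append hj.1
  · rw [substr_length_right, Nat.add_sub_cancel]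
    exact hm.trans (drop_sublist_drop_left S hjm)

section Algorithms

variable [DecidableEq α] {S : List α} {σ : α} {Y Z : List α}

theorem Alg1Output.replicate_sublist (hY : Alg1Output S σ Y) :
    replicate (S.count σ / 2) σ <+ Y := by
  obtain ⟨_, _, Y₀, _, _, hY₀, (⟨rfl, -⟩ | ⟨-, _, -, -, hY⟩)⟩ := hY
  · exact hY₀.1
  · exact hY₀.1.trans hY.1

theorem Alg1Output.exists_eq_cons (hY : Alg1Output S σ Y) (hℓ : 2 ≤ S.count σ) :
    ∃ Y', Y = σ :: Y' := by
  obtain ⟨i₁, i, Y₀, hi₁, hi, hY₀, (⟨rfl, -⟩ | ⟨-, i', hi', -, hY⟩)⟩ := hY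
  · exact hY₀.exists_eq_cons_of_nthOccPos hi₁ hi
      ((hi₁.lt_iff_lt hi le_rfl (by omega)).mpr (by omega))
  · exact hY.exists_eq_cons_of_nthOccPos hi₁ hi'
      ((hi₁.lt_iff_lt hi' le_rfl (by omega)).mpr (by omega))

theorem Alg1Output.eq_of_sublist (hY : Alg1Output S σ Y) {X : List α} {s t q p : ℕ}
    (hq : NthOccPos S σ s q) (hs : 1 ≤ s) (hp : NthOccPos S σ t p)
    (ht : t = S.count σ / 2 + 1 ∨ Odd (S.count σ) ∧ t = S.count σ / 2 + 2)
    (hYX : Y <+ X) (hX₁ : X <+ substr S q (p - 1)) (hX₂ : X <+ substr S p S.length) : X = Y := by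
  obtain ⟨i₁, i, Y₀, hi₁, hi, hY₀, hcase⟩ := hY
  have hY₀Y : Y₀ <+ Y := by
    rcases hcase with ⟨rfl, -⟩ | ⟨-, _, -, -, hY⟩
    exacts [Sublist.refl _, hY.1]
  have hX₁' : X <+ substr S i₁ (p - 1) :=
    hX₁.trans (substr_sublist_substr_of_le S _ hi₁.1 (hi₁.le_of_le hq le_rfl hs))
  rcases ht with rfl | ⟨hodd, rfl⟩
  · obtain rfl := hp.unique hi (by omega)
    have hXY₀ : X = Y₀ := hY₀.2.2.2 X (hY₀Y.trans hYX) hX₁' hX₂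
    exact hYX.antisymm (hXY₀ ▸ hY₀Y) |>.symm
  · rcases hcase with ⟨rfl, hnot⟩ | ⟨-, i', hi', -, hY⟩
    · exact absurd (hYX.trans hX₂) (hnot hodd p hp)
    · obtain rfl := hp.unique hi' (by omega)
      exact hY.2.2.2 X hYX hX₁' hX₂

theorem Alg2Output.sublist (hZ : Alg2Output S σ Y Z) : Y <+ Z := by
  obtain ⟨_, _, _, Z₀, _, _, _, hZ₀, (⟨rfl, -⟩ | ⟨-, _, -, -, hZ⟩)⟩ := hZ
  · exact hZ₀.1
  · exact hZ₀.1.trans hZ.1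

theorem Alg2Output.append_self_sublist (hZ : Alg2Output S σ Y Z) : Z ++ Z <+ S := by
  obtain ⟨_, _, _, Z₀, _, _, _, hZ₀, (⟨rfl, -⟩ | ⟨-, _, -, -, hZ⟩)⟩ := hZ
  · have := hZ₀.2.1.append hZ₀.2.2.1
    rwa [substr_one_left, substr_length_right, Nat.add_sub_cancel, take_append_drop] at this
  · have := hZ.2.1.append hZ.2.2.1
    rwa [substr_one_left, substr_length_right, Nat.add_sub_cancel, take_append_drop] at this

theorem Alg2Output.append_eq (hZ : Alg2Output S σ Y Z) (hY : Y ≠ []) {G : List α} {t p m : ℕ}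
    (hp : NthOccPos S σ t p) (ht : t = 1 ∨ Odd (S.count σ) ∧ t = 2)
    (hG : G <+ S.take (p - 1)) (hYm : Y <+ substr S p m) (hm : G ++ Y <+ S.drop m)
    (hZGY : Z <+ G ++ Y) : G ++ Y = Z := by
  obtain ⟨i₁, i₂, j₁, Z₀, hi₁, hi₂, hj₁, hZ₀, hcase⟩ := hZ
  have hZ₀Z : Z₀ <+ Z := by
    rcases hcase with ⟨rfl, -⟩ | ⟨-, _, -, -, hZ⟩
    exacts [Sublist.refl _, hZ.1]
  rcases ht with rfl | ⟨hodd, rfl⟩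
  · obtain rfl := hp.unique hi₁ le_rfl
    have := hZ₀.append_eq_of_leftmostAnchor hj₁ hY hp.1 hG hYm hm (hZ₀Z.trans hZGY)
    exact (hZGY.antisymm (this ▸ hZ₀Z)).symm
  · obtain rfl := hp.unique hi₂ (by omega)
    rcases hcase with ⟨rfl, hnot⟩ | ⟨-, j₂, hj₂, -, hZ⟩
    · obtain ⟨j₂, hj₂⟩ := exists_leftmostAnchor hYm
      refine absurd ?_ (hnot hodd j₂ hj₂)
      rw [substr_length_right, Nat.add_sub_cancel]
      exact hZGY.trans (hm.trans (drop_sublist_drop_left S (hj₂.2 m hYm)))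
    · exact hZ.append_eq_of_leftmostAnchor hj₂ hY hp.1 hG hYm hm hZGY

theorem Alg2Output.eq_of_sublist_of_eq_append (hℓ : 2 ≤ S.count σ) (hY : Alg1Output S σ Y)
    (hZ : Alg2Output S σ Y Z) {W U V : List α} (hS : S = U ++ V) (hZW : Z <+ W)
    (hWU : W <+ U) (hWV : W <+ V) : W = Z := by
  obtain ⟨Y', rfl⟩ := hY.exists_eq_cons hℓ
  obtain ⟨G, H, rfl, hY'H⟩ := (hZ.sublist.trans hZW).exists_eq_append_cons
  obtain ⟨A, B, rfl, hGA, hHB⟩ := hWU.exists_eq_append_cons_of_append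
  obtain ⟨A', B', rfl, -, hHB'⟩ := hWV.exists_eq_append_cons_of_append
  have hp : NthOccPos S σ (A.count σ + 1) (A.length + 1) :=
    nthOccPos_of_eq_append_cons (B := B ++ A' ++ σ :: B') (by simp [hS])
  have hp' : NthOccPos S σ ((A ++ σ :: B ++ A').count σ + 1) ((A ++ σ :: B ++ A').length + 1) :=
    nthOccPos_of_eq_append_cons (B := B') (by simp [hS])
  have hℓS : S.count σ = A.count σ + B.count σ + A'.count σ + B'.count σ + 2 := by
    simp only [hS, count_append, count_cons_self]; omega
  have he : S.count σ / 2 ≤ Y'.count σ + 1 := by simpa using hY.replicate_sublist.count_le σ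
  have hY'H' := hY'H.count_le σ
  have hHB₁ := hHB.count_le σ
  have hHB₂ := hHB'.count_le σ
  have hH : σ :: H = σ :: Y' := by
    refine hY.eq_of_sublist hp (by omega) hp' ?_ (hY'H.cons_cons σ) ?_ ?_
    · simp only [count_append, count_cons_self, Nat.odd_iff]; omega
    · rw [substr_eq_of_eq_append (B := σ :: B ++ A') (C := σ :: B') (by simp [hS]) rfl
        (by simp)]
      exact (hHB.cons_cons σ).trans (sublist_append_left _ A')
    · rw [substr_eq_of_eq_append (B := σ :: B') (C := []) (by simp [hS]) rfl
        (by simp [hS]; omega)]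
      exact hHB'.cons_cons σ
  obtain rfl : H = Y' := (cons_inj_right σ).mp hH
  have hG : G <+ S.take (A.length + 1 - 1) := by simpa [hS] using hGA
  have hσH : σ :: H <+ substr S (A.length + 1) (A.length + (σ :: B).length) := by
    rw [substr_eq_of_eq_append (C := A' ++ σ :: B') (by simp [hS]) rfl rfl]
    exact hHB.cons_cons σ
  have hWV' : G ++ σ :: H <+ S.drop (A.length + (σ :: B).length) := by simpa [hS] using hWV
  exact hZ.append_eq (cons_ne_nil σ H) hp (by simp only [Nat.odd_iff]; omega) hG hσH hWV' hZW

end Algorithms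

/-- If `σ` occurs exactly `ℓ ≥ 2` times in `S`, `e = ⌊ℓ/2⌋`, `Y` is an
Algorithm-1 output and `Z` an Algorithm-2 output built from `Y`, then `ZZ` is a maximal
square subsequence of `S` containing `σ^(2e)` as a subsequence. -/
theorem alg2_output_maximal_square {α : Type*} [DecidableEq α] (S : List α) (σ : α)
    (hℓ : 2 ≤ S.count σ) (Y Z : List α)
    (hY : Alg1Output S σ Y) (hZ : Alg2Output S σ Y Z) :
    IsMaxSquareSubseq S (Z ++ Z) ∧
      List.replicate (2 * (S.count σ / 2)) σ <+ Z ++ Z := by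
  have hrep : replicate (S.count σ / 2) σ <+ Z := hY.replicate_sublist.trans hZ.sublist
  refine ⟨⟨⟨⟨Z, rfl⟩, hZ.append_self_sublist⟩, ?_⟩, ?_⟩
  · rintro _ ⟨⟨W, rfl⟩, hWW⟩ hZW
    obtain ⟨U, V, hS, hWU, hWV⟩ := append_sublist_iff.mp hWW
    rw [hZ.eq_of_sublist_of_eq_append hℓ hY hS hZW.of_append_self hWU hWV]
  · rw [two_mul, replicate_add]
    exact hrep.append hrep
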